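/- Let x = (x₁,x₂) ∈ ℝ², y = (y₁,y₂,y₃) ∈ ℝ³, and let L be a real Lie algebra with a basis e₁,…,e₆ whose brackets are those of g(x,y). Then the determinant of the 6×6 matrix (κ(e_i,e_j))_{1≤i,j≤6}, where κ is the Killing form of L, equals (4·Δ(y)·R(x,y)²)³, where Δ(y) = y₂² − 4y₁y₃ and R(x,y) = x₂²y₁ + x₁²y₃ − x₁x₂y₂. -/

import Mathlib

noncomputable section

/-- `Wpair i j v w = vᵢwⱼ − vⱼwᵢ`, the evaluation of `eⁱ∧eʲ` on `(v,w)`. -/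
def Wpair (i j : Fin 6) (v w : Fin 6 → ℝ) : ℝ := v i * w j - v j * w i

/-- The antisymmetric bilinear bracket of `g(x,y)` on `ℝ⁶`, determined (in 1-based index
notation) by `[e₃,e₅] = (x₁y₂−x₂y₁)e₁ − x₁y₁e₂`, `[e₃,e₆] = [e₄,e₅] = x₁y₃e₁ − x₂y₁e₂`,
`[e₄,e₆] = x₂y₃e₁ + (x₁y₃−x₂y₂)e₂`, `[e₁,e₅] = (x₂y₁−x₁y₂)e₃ + x₁y₁e₄`,
`[e₁,e₆] = [e₂,e₅] = −x₁y₃e₃ + x₂y₁e₄`, `[e₂,e₆] = −x₂y₃e₃ + (x₂y₂−x₁y₃)e₄`,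
`[e₁,e₃] = (x₁y₂−x₂y₁)e₅ − x₁y₁e₆`, `[e₁,e₄] = [e₂,e₃] = x₁y₃e₅ − x₂y₁e₆`,
`[e₂,e₄] = x₂y₃e₅ + (x₁y₃−x₂y₂)e₆`, `[e₁,e₂] = [e₃,e₄] = [e₅,e₆] = 0`. -/
def brXY (x : Fin 2 → ℝ) (y : Fin 3 → ℝ) (v w : Fin 6 → ℝ) : Fin 6 → ℝ :=
  ![(x 0 * y 1 - x 1 * y 0) * Wpair 2 4 v w + x 0 * y 2 * (Wpair 2 5 v w + Wpair 3 4 v w) +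
      x 1 * y 2 * Wpair 3 5 v w,
    -(x 0 * y 0 * Wpair 2 4 v w) - x 1 * y 0 * (Wpair 2 5 v w + Wpair 3 4 v w) +
      (x 0 * y 2 - x 1 * y 1) * Wpair 3 5 v w,
    (x 1 * y 0 - x 0 * y 1) * Wpair 0 4 v w - x 0 * y 2 * (Wpair 0 5 v w + Wpair 1 4 v w) -
      x 1 * y 2 * Wpair 1 5 v w,
    x 0 * y 0 * Wpair 0 4 v w + x 1 * y 0 * (Wpair 0 5 v w + Wpair 1 4 v w) +
      (x 1 * y 1 - x 0 * y 2) * Wpair 1 5 v w,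
    (x 0 * y 1 - x 1 * y 0) * Wpair 0 2 v w + x 0 * y 2 * (Wpair 0 3 v w + Wpair 1 2 v w) +
      x 1 * y 2 * Wpair 1 3 v w,
    -(x 0 * y 0 * Wpair 0 2 v w) - x 1 * y 0 * (Wpair 0 3 v w + Wpair 1 2 v w) +
      (x 0 * y 2 - x 1 * y 1) * Wpair 1 3 v w]

/-- A basis `e` of a real Lie algebra `L` realizes the brackets of `g(x,y)` if the bracket of
any two basis vectors is given by the structure constants of `brXY x y`. -/
def RealizesGXY {L : Type*} [LieRing L] [LieAlgebra ℝ L] (x : Fin 2 → ℝ) (y : Fin 3 → ℝ)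
    (e : Module.Basis (Fin 6) ℝ L) : Prop :=
  ∀ i j : Fin 6, ⁅e i, e j⁆ = ∑ k, brXY x y (Pi.single i 1) (Pi.single j 1) k • e k

/-! In the basis `e`, `κ(eᵢ, eⱼ) = ∑ₖ ∑ₘ cᵢₖᵐ cⱼₘᵏ` in terms of the structure constants. For
`g(x,y)` this Gram matrix is block diagonal along the pairs `(e₁,e₂)`, `(e₃,e₄)`, `(e₅,e₆)`, with
three equal symmetric `2 × 2` blocks `B(x,y)`, and `det B(x,y) = 4 Δ(y) R(x,y)²`. -/

theorem LieModule.traceForm_apply_eq_sum_repr {R L M ι : Type*} [CommRing R] [LieRing L]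
    [LieAlgebra R L] [AddCommGroup M] [Module R M] [LieRingModule L M] [LieModule R L M]
    [Fintype ι] [DecidableEq ι] (b : Module.Basis ι R M) (x y : L) :
    LieModule.traceForm R L M x y = ∑ m, ∑ k, b.repr ⁅x, b k⁆ m * b.repr ⁅y, b m⁆ k := by
  rw [LieModule.traceForm_apply_apply, LinearMap.trace_eq_matrix_trace R b,
    LinearMap.toMatrix_comp b b, Matrix.trace]
  simp [Matrix.mul_apply, LinearMap.toMatrix_apply]

theorem RealizesGXY.repr_bracket {L : Type*} [LieRing L] [LieAlgebra ℝ L] {x : Fin 2 → ℝ}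
    {y : Fin 3 → ℝ} {e : Module.Basis (Fin 6) ℝ L} (he : RealizesGXY x y e) (i j k : Fin 6) :
    e.repr ⁅e i, e j⁆ k = brXY x y (Pi.single i 1) (Pi.single j 1) k := by
  rw [he i j]
  simp [Finsupp.single_apply]

def killingBlock (x : Fin 2 → ℝ) (y : Fin 3 → ℝ) : Matrix (Fin 2) (Fin 2) ℝ :=
  !![4 * x 0 ^ 2 * y 0 * y 2 - 2 * x 0 ^ 2 * y 1 ^ 2 + 4 * x 0 * x 1 * y 0 * y 1
        - 4 * x 1 ^ 2 * y 0 ^ 2,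
      8 * x 0 * x 1 * y 0 * y 2 - 2 * x 1 ^ 2 * y 0 * y 1 - 2 * x 0 ^ 2 * y 1 * y 2;
    8 * x 0 * x 1 * y 0 * y 2 - 2 * x 1 ^ 2 * y 0 * y 1 - 2 * x 0 ^ 2 * y 1 * y 2,
      4 * x 1 ^ 2 * y 0 * y 2 - 2 * x 1 ^ 2 * y 1 ^ 2 + 4 * x 0 * x 1 * y 1 * y 2
        - 4 * x 0 ^ 2 * y 2 ^ 2]

theorem det_killingBlock (x : Fin 2 → ℝ) (y : Fin 3 → ℝ) :
    (killingBlock x y).det =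
      4 * (y 1 ^ 2 - 4 * y 0 * y 2) * (x 1 ^ 2 * y 0 + x 0 ^ 2 * y 2 - x 0 * x 1 * y 1) ^ 2 := by
  rw [killingBlock, Matrix.det_fin_two_of]
  ring

/-- Index `2 * p + s` of `Fin 6` is the entry `s` of the block `p`. -/
def killingGram (x : Fin 2 → ℝ) (y : Fin 3 → ℝ) : Matrix (Fin 6) (Fin 6) ℝ :=
  Matrix.reindex ((Equiv.prodComm _ _).trans finProdFinEquiv)
    ((Equiv.prodComm _ _).trans finProdFinEquiv)
    (Matrix.blockDiagonal fun _ : Fin 3 => killingBlock x y)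

theorem det_killingGram (x : Fin 2 → ℝ) (y : Fin 3 → ℝ) :
    (killingGram x y).det = (killingBlock x y).det ^ 3 := by
  rw [killingGram, Matrix.det_reindex_self, Matrix.det_blockDiagonal]
  simp

theorem RealizesGXY.killingForm_gram {L : Type*} [LieRing L] [LieAlgebra ℝ L] {x : Fin 2 → ℝ}
    {y : Fin 3 → ℝ} {e : Module.Basis (Fin 6) ℝ L} (he : RealizesGXY x y e) :
    Matrix.of (fun i j => killingForm ℝ L (e i) (e j)) = killingGram x y := by
  ext i j
  rw [Matrix.of_apply, LieModule.traceForm_apply_eq_sum_repr e]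
  simp only [he.repr_bracket]
  fin_cases i <;> fin_cases j <;>
    simp [Fin.sum_univ_six, brXY, Wpair, Pi.single_apply, killingGram, Matrix.blockDiagonal_apply,
      killingBlock, finProdFinEquiv, Fin.divNat, Fin.modNat] <;> ring

theorem stmt5_general (x : Fin 2 → ℝ) (y : Fin 3 → ℝ) (L : Type*) [LieRing L] [LieAlgebra ℝ L]
    (e : Module.Basis (Fin 6) ℝ L) (he : RealizesGXY x y e) :
    (Matrix.of fun i j : Fin 6 => killingForm ℝ L (e i) (e j)).det =
      (4 * (y 1 ^ 2 - 4 * y 0 * y 2) *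
        (x 1 ^ 2 * y 0 + x 0 ^ 2 * y 2 - x 0 * x 1 * y 1) ^ 2) ^ 3 := by
  rw [he.killingForm_gram, det_killingGram, det_killingBlock]

/-- The determinant of the Gram matrix of the Killing form of `g(x,y)` in the adapted basis
is `(4 Δ(y) R(x,y)²)³`. -/
theorem stmt5 (x : Fin 2 → ℝ) (y : Fin 3 → ℝ) (L : Type*) [LieRing L] [LieAlgebra ℝ L]
    [Module.Finite ℝ L] (e : Module.Basis (Fin 6) ℝ L) (he : RealizesGXY x y e) :
    (Matrix.of fun i j : Fin 6 => killingForm ℝ L (e i) (e j)).det =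
      (4 * (y 1 ^ 2 - 4 * y 0 * y 2) *
        (x 1 ^ 2 * y 0 + x 0 ^ 2 * y 2 - x 0 * x 1 * y 1) ^ 2) ^ 3 :=
  stmt5_general x y L e he
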